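/- arXiv:2002.02173 — 5 statements merged into one kernel-verified Lean document; each statement's English description precedes it below -/
import Mathlib

section
/- Let N, F ≥ 1, and for each i ∈ {1,…,N} let λᵢ, μ_{b,i}, μ_{e,i} be reals with 0 < λᵢ < μ_{b,i} < μ_{e,i}. Let P_r : {1,…,F} → ℝ be nonnegative weights. For a cache-placement vector p ∈ ℝ^{N×F}, define H_e(p) = Σ_{f=1}^{F} P_r(f) · Σ_{i=1}^{N} p(i,f) and D(p) = Σ_{i=1}^{N} (λᵢ / Σ_{j=1}^{N} λⱼ) · [ H_e(p)/(μ_{e,i} − λᵢ H_e(p)) + (1 − H_e(p))/(μ_{b,i} − λᵢ(1 − H_e(p))) ]. Then D is convex on the convex set { p ∈ ℝ^{N×F} : 0 ≤ H_e(p) ≤ 1 }. -/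
/-!
With `H = He p`, each station contributes `H / (μₑ - λH) + (1 - H) / (μ_b - λ(1 - H))`. Both
summands are of the form `x / (a - b x) = (a / b) (a - b x)⁻¹ - 1 / b`, i.e. a nonnegative multiple
of the inverse of a positive affine function, hence convex on `[0, 1]`. A nonnegative combination
of these is convex in `H`, and `He` is linear in `p`, so `D` is convex on `He ⁻¹' [0, 1]`.
-/

open Set

section
variable {𝕜 E β ι : Type*} [Semiring 𝕜] [PartialOrder 𝕜] [AddCommMonoid E] [AddCommMonoid β]
  [PartialOrder β] [IsOrderedAddMonoid β] [SMul 𝕜 E] [DistribMulAction 𝕜 β]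

theorem convexOn_sum {s : Set E} (hs : Convex 𝕜 s) (t : Finset ι) {f : ι → E → β}
    (hf : ∀ i ∈ t, ConvexOn 𝕜 s (f i)) : ConvexOn 𝕜 s fun x => ∑ i ∈ t, f i x := by
  classical
  induction t using Finset.cons_induction with
  | empty => exact ⟨hs, fun _ _ _ _ _ _ _ _ _ => by simp⟩
  | cons i t _ ih =>
    simp only [Finset.sum_cons]
    exact (hf i (Finset.mem_cons_self i t)).add (ih fun j hj => hf j (Finset.mem_cons_of_mem hj))

end

theorem convexOn_div_sub_mul {a b : ℝ} (ha : 0 ≤ a) (hb : 0 < b) :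
    ConvexOn ℝ (Iio (a / b)) fun x => x / (a - b * x) := by
  let φ : ℝ →ᵃ[ℝ] ℝ := AffineMap.const ℝ ℝ a - b • AffineMap.id ℝ ℝ
  have hφ : ∀ x, φ x = a - b * x := fun x => rfl
  have hpre : Iio (a / b) = φ ⁻¹' Ioi 0 := by
    ext x
    simp only [mem_Iio, mem_preimage, mem_Ioi, hφ, sub_pos, lt_div_iff₀ hb, mul_comm b]
  have hinv : ConvexOn ℝ (Iio (a / b)) fun x => (a - b * x)⁻¹ := by
    rw [hpre]
    simpa [Function.comp_def, zpow_neg_one, hφ] using (convexOn_zpow (𝕜 := ℝ) (-1)).comp_affineMap φ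
  refine ((hinv.smul (div_nonneg ha hb.le)).add_const (-(1 / b))).congr fun x hx => ?_
  have hx : 0 < a - b * x := by rw [hpre] at hx; exact hx
  simp only [Pi.add_apply, smul_eq_mul]
  field_simp
  ring

theorem convexOn_stationDownloadTime {lam mub mue : ℝ} (hlam : 0 < lam) (hlb : lam < mub)
    (hle : lam < mue) :
    ConvexOn ℝ (Icc 0 1) fun H => H / (mue - lam * H) + (1 - H) / (mub - lam * (1 - H)) := by
  have hIcc (c : ℝ) (hc : lam < c) : Icc (0 : ℝ) 1 ⊆ Iio (c / lam) := fun x hx => by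
    rw [mem_Iio, lt_div_iff₀ hlam]; nlinarith [hx.2]
  have hfog := (convexOn_div_sub_mul (hlam.trans hle).le hlam).subset (hIcc mue hle) (convex_Icc 0 1)
  let σ : ℝ →ᵃ[ℝ] ℝ := AffineMap.const ℝ ℝ 1 - AffineMap.id ℝ ℝ
  have hcloud : ConvexOn ℝ (Icc 0 1) fun H => (1 - H) / (mub - lam * (1 - H)) := by
    refine (((convexOn_div_sub_mul (hlam.trans hlb).le hlam).subset (hIcc mub hlb)
      (convex_Icc 0 1)).comp_affineMap σ).subset (fun x hx => ?_) (convex_Icc 0 1)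
    simpa [σ] using hx.symm
  exact hfog.add hcloud

theorem adt_convex_in_placement_general
    (N F : ℕ)
    (lam mub mue : Fin N → ℝ)
    (hpos : ∀ i, 0 < lam i) (hlb : ∀ i, lam i < mub i) (hbe : ∀ i, mub i < mue i)
    (Pr : Fin F → ℝ)
    (He : (Fin N → Fin F → ℝ) → ℝ)
    (hHe : ∀ p, He p = ∑ f, Pr f * ∑ i, p i f)
    (D : (Fin N → Fin F → ℝ) → ℝ)
    (hD : ∀ p, D p = ∑ i, (lam i / ∑ j, lam j) *
      (He p / (mue i - lam i * He p) + (1 - He p) / (mub i - lam i * (1 - He p)))) :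
    ConvexOn ℝ {p : Fin N → Fin F → ℝ | 0 ≤ He p ∧ He p ≤ 1} D := by
  have hLin : IsLinearMap ℝ He := by
    constructor <;> intros <;>
      simp only [hHe, Pi.add_apply, Pi.smul_apply, smul_eq_mul, Finset.sum_add_distrib, mul_add,
        Finset.mul_sum, mul_left_comm]
  have hweight (i : Fin N) : 0 ≤ lam i / ∑ j, lam j :=
    div_nonneg (hpos i).le (Finset.sum_nonneg fun j _ => (hpos j).le)
  have hADT : ConvexOn ℝ (Icc 0 1) fun H => ∑ i, (lam i / ∑ j, lam j) *
      (H / (mue i - lam i * H) + (1 - H) / (mub i - lam i * (1 - H))) :=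
    convexOn_sum (convex_Icc 0 1) _ fun i _ =>
      (convexOn_stationDownloadTime (hpos i) (hlb i) ((hlb i).trans (hbe i))).smul (hweight i)
  exact (hADT.comp_linearMap (IsLinearMap.mk' He hLin)).congr fun p _ => (hD p).symm

/-- Theorem 1 of the paper: the overall average download time `D`, as a function of the
cache placement vector `p`, is convex on the set where the edge-cache-hit ratio
`He p` lies in `[0,1]`. -/
theorem adt_convex_in_placement
    (N F : ℕ) (hN : 1 ≤ N) (hF : 1 ≤ F)
    (lam mub mue : Fin N → ℝ)
    (hpos : ∀ i, 0 < lam i) (hlb : ∀ i, lam i < mub i) (hbe : ∀ i, mub i < mue i)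
    (Pr : Fin F → ℝ) (hPr : ∀ f, 0 ≤ Pr f)
    (He : (Fin N → Fin F → ℝ) → ℝ)
    (hHe : ∀ p, He p = ∑ f, Pr f * ∑ i, p i f)
    (D : (Fin N → Fin F → ℝ) → ℝ)
    (hD : ∀ p, D p = ∑ i, (lam i / ∑ j, lam j) *
      (He p / (mue i - lam i * He p) + (1 - He p) / (mub i - lam i * (1 - He p)))) :
    ConvexOn ℝ {p : Fin N → Fin F → ℝ | 0 ≤ He p ∧ He p ≤ 1} D :=
  adt_convex_in_placement_general N F lam mub mue hpos hlb hbe Pr He hHe D hD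
end

section
/- Let λ, μ_b, μ_e be reals with 0 < λ < μ_b < μ_e, and define H_cpl = ((μ_e − √(μ_e μ_b))·√μ_b + λ·√μ_e) / (λ·(√μ_b + √μ_e)). Then H_cpl > 0, μ_e − λ·H_cpl = √μ_e·(μ_e + μ_b − λ)/(√μ_b + √μ_e) > 0, and μ_b − λ·(1 − H_cpl) = √μ_b·(μ_e + μ_b − λ)/(√μ_b + √μ_e) > 0. -/
/-! Writing `μ_b = a²` and `μ_e = b²` with `0 < a < b` turns `√(μ_e μ_b)` into `a b`, after which
both denominators are rational identities in `a`, `b`, `λ` over the common denominator `a + b`,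
and `λ H_cpl = (a b (b - a) + λ b) / (a + b)` is visibly positive. -/

/-- `H_cpl` in terms of `a = √μ_b` and `b = √μ_e`. -/
def cplHitRatio {K : Type*} [Field K] (l a b : K) : K :=
  ((b ^ 2 - b * a) * a + l * b) / (l * (a + b))

section Field

variable {K : Type*} [Field K] {l a b : K}

theorem sq_sub_mul_cplHitRatio (hl : l ≠ 0) (hab : a + b ≠ 0) :
    b ^ 2 - l * cplHitRatio l a b = b * (b ^ 2 + a ^ 2 - l) / (a + b) := by
  unfold cplHitRatio
  field_simp
  ring

theorem sq_sub_mul_one_sub_cplHitRatio (hl : l ≠ 0) (hab : a + b ≠ 0) :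
    a ^ 2 - l * (1 - cplHitRatio l a b) = a * (b ^ 2 + a ^ 2 - l) / (a + b) := by
  unfold cplHitRatio
  field_simp
  ring

end Field

theorem cplHitRatio_pos {K : Type*} [Field K] [LinearOrder K] [IsStrictOrderedRing K] {l a b : K}
    (hl : 0 < l) (ha : 0 < a) (hab : a < b) : 0 < cplHitRatio l a b := by
  have hb : 0 < b := ha.trans hab
  have hba : 0 < b - a := sub_pos.mpr hab
  have hnum : (b ^ 2 - b * a) * a + l * b = b * a * (b - a) + l * b := by ring
  rw [cplHitRatio, hnum]
  positivity

/-- Positivity of the CPL-optimal edge-cache-hit ratio `H_cpl` and of the two queueing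
denominators at `H_cpl`, with their closed forms. -/
theorem hcpl_denominators_positive
    (lam mub mue : ℝ) (h0 : 0 < lam) (h1 : lam < mub) (h2 : mub < mue)
    (Hcpl : ℝ)
    (hH : Hcpl = ((mue - Real.sqrt (mue * mub)) * Real.sqrt mub + lam * Real.sqrt mue) /
      (lam * (Real.sqrt mub + Real.sqrt mue))) :
    0 < Hcpl ∧
    mue - lam * Hcpl = Real.sqrt mue * (mue + mub - lam) / (Real.sqrt mub + Real.sqrt mue) ∧
    0 < mue - lam * Hcpl ∧
    mub - lam * (1 - Hcpl) = Real.sqrt mub * (mue + mub - lam) / (Real.sqrt mub + Real.sqrt mue) ∧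
    0 < mub - lam * (1 - Hcpl) := by
  have hmub : 0 < mub := h0.trans h1
  obtain ⟨a, ha, rfl⟩ : ∃ a, 0 < a ∧ a ^ 2 = mub :=
    ⟨√mub, Real.sqrt_pos.mpr hmub, Real.sq_sqrt hmub.le⟩
  obtain ⟨b, hb, rfl⟩ : ∃ b, 0 < b ∧ b ^ 2 = mue :=
    ⟨√mue, Real.sqrt_pos.mpr (hmub.trans h2), Real.sq_sqrt (hmub.trans h2).le⟩
  have hab : a < b := lt_of_pow_lt_pow_left₀ 2 hb.le h2
  rw [← mul_pow, Real.sqrt_sq (by positivity)] at hH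
  rw [Real.sqrt_sq ha.le, Real.sqrt_sq hb.le] at hH ⊢
  change Hcpl = cplHitRatio lam a b at hH
  subst hH
  have hS : a + b ≠ 0 := by positivity
  have hsum : 0 < b ^ 2 + a ^ 2 - lam := by nlinarith
  rw [sq_sub_mul_cplHitRatio h0.ne' hS, sq_sub_mul_one_sub_cplHitRatio h0.ne' hS]
  exact ⟨cplHitRatio_pos h0 ha hab, rfl, by positivity, rfl, by positivity⟩
end

section
/- Let λ, μ_b, μ_e be reals with 0 < λ < μ_b < μ_e, define f(H) = H/(μ_e − λH) + (1−H)/(μ_b − λ(1−H)) and H_cpl = ((μ_e − √(μ_e μ_b))·√μ_b + λ·√μ_e) / (λ·(√μ_b + √μ_e)). If H_cpl ≤ 1, then f(H_cpl) ≤ f(H) for every H ∈ [0,1]; i.e., H_cpl is a global minimizer of the average download time over the edge-cache-hit ratios [0,1]. -/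
/-!
Writing `a = μ_e - λH` and `b = μ_b - λ(1 - H)`, one has `f(H) = (μ_e / a + μ_b / b - 2) / λ`
with `a + b = μ_e + μ_b - λ` independent of `H`. By Sedrakyan's (Titu's) inequality
`μ_e / a + μ_b / b ≥ (√μ_e + √μ_b)² / (a + b)`, with equality when `a : b = √μ_e : √μ_b`,
and `H_cpl` is precisely the ratio where this proportionality holds.
-/

open Real

theorem sq_add_div_add_le_sq_div_add_sq_div {R : Type*} [Semifield R] [LinearOrder R]
    [IsStrictOrderedRing R] [ExistsAddOfLE R] (x y : R) {a b : R} (ha : 0 < a) (hb : 0 < b) :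
    (x + y) ^ 2 / (a + b) ≤ x ^ 2 / a + y ^ 2 / b := by
  simpa [Fin.sum_univ_two] using
    Finset.sq_sum_div_le_sum_sq_div Finset.univ ![x, y] (g := ![a, b])
      (by simp [Fin.forall_fin_two, ha, hb])

theorem sq_div_mul_add_sq_div_mul {K : Type*} [Field K] (x y t : K) :
    x ^ 2 / (t * x) + y ^ 2 / (t * y) = (x + y) ^ 2 / (t * (x + y)) := by
  field_simp

theorem div_sub_mul_eq_div_sub_one_div {K : Type*} [Field K] {l m x : K} (hl : l ≠ 0)
    (h : m - l * x ≠ 0) : x / (m - l * x) = (m / (m - l * x) - 1) / l := by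
  rw [div_sub_one h, div_div, sub_sub_cancel, mul_comm l x, mul_div_mul_right _ _ hl]

section CPL

variable {lam mub mue : ℝ}

noncomputable def avgDownloadTime (lam mub mue H : ℝ) : ℝ :=
  H / (mue - lam * H) + (1 - H) / (mub - lam * (1 - H))

noncomputable def hCpl (lam mub mue : ℝ) : ℝ :=
  ((mue - √(mue * mub)) * √mub + lam * √mue) / (lam * (√mub + √mue))

theorem avgDownloadTime_eq {H : ℝ} (hl : lam ≠ 0) (ha : mue - lam * H ≠ 0)
    (hb : mub - lam * (1 - H) ≠ 0) :
    avgDownloadTime lam mub mue H =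
      (mue / (mue - lam * H) + mub / (mub - lam * (1 - H)) - 2) / lam := by
  rw [avgDownloadTime, div_sub_mul_eq_div_sub_one_div hl ha, div_sub_mul_eq_div_sub_one_div hl hb]
  ring

theorem le_avgDownloadTime {H : ℝ} (hl : 0 < lam) (hmub : 0 ≤ mub) (hmue : 0 ≤ mue)
    (ha : 0 < mue - lam * H) (hb : 0 < mub - lam * (1 - H)) :
    ((√mue + √mub) ^ 2 / (mue + mub - lam) - 2) / lam ≤ avgDownloadTime lam mub mue H := by
  rw [avgDownloadTime_eq hl.ne' ha.ne' hb.ne']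
  gcongr
  have hsum : mue + mub - lam = (mue - lam * H) + (mub - lam * (1 - H)) := by ring
  calc (√mue + √mub) ^ 2 / (mue + mub - lam)
      ≤ √mue ^ 2 / (mue - lam * H) + √mub ^ 2 / (mub - lam * (1 - H)) :=
        hsum ▸ sq_add_div_add_le_sq_div_add_sq_div _ _ ha hb
    _ = mue / (mue - lam * H) + mub / (mub - lam * (1 - H)) := by
        rw [sq_sqrt hmue, sq_sqrt hmub]

theorem avgDownloadTime_hCpl (hl : 0 < lam) (hmub : 0 < mub) (hlmue : lam < mue) :
    avgDownloadTime lam mub mue (hCpl lam mub mue) =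
      ((√mue + √mub) ^ 2 / (mue + mub - lam) - 2) / lam := by
  have hmue : 0 < mue := hl.trans hlmue
  have hsqrt_mul : √(mue * mub) = √mue * √mub := sqrt_mul hmue.le mub
  rw [hCpl, hsqrt_mul]
  set s := √mub
  set e := √mue
  have hs : 0 < s := sqrt_pos.2 hmub
  have he : 0 < e := sqrt_pos.2 hmue
  have hs2 : s ^ 2 = mub := sq_sqrt hmub.le
  have he2 : e ^ 2 = mue := sq_sqrt hmue.le
  set t := (mue + mub - lam) / (e + s) with ht_def
  have ht : 0 < t := div_pos (by linarith) (by positivity)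
  have ha : mue - lam * (((mue - e * s) * s + lam * e) / (lam * (s + e))) = t * e := by
    rw [ht_def, ← hs2, ← he2]
    field_simp
    ring
  have hb : mub - lam * (1 - ((mue - e * s) * s + lam * e) / (lam * (s + e))) = t * s := by
    rw [ht_def, ← hs2, ← he2]
    field_simp
    ring
  have htS : t * (e + s) = mue + mub - lam := by
    rw [ht_def]
    field_simp
  calc avgDownloadTime lam mub mue (((mue - e * s) * s + lam * e) / (lam * (s + e)))
      = (mue / (t * e) + mub / (t * s) - 2) / lam := by
        rw [avgDownloadTime_eq hl.ne' (ha ▸ by positivity) (hb ▸ by positivity), ha, hb]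
    _ = (e ^ 2 / (t * e) + s ^ 2 / (t * s) - 2) / lam := by rw [he2, hs2]
    _ = ((e + s) ^ 2 / (t * (e + s)) - 2) / lam := by rw [sq_div_mul_add_sq_div_mul]
    _ = ((e + s) ^ 2 / (mue + mub - lam) - 2) / lam := by rw [htS]

end CPL

theorem hcpl_global_minimizer_general
    (lam mub mue : ℝ) (h0 : 0 < lam) (h1 : lam < mub) (h2 : mub < mue)
    (f : ℝ → ℝ)
    (hf : ∀ H, f H = H / (mue - lam * H) + (1 - H) / (mub - lam * (1 - H)))
    (Hcpl : ℝ)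
    (hH : Hcpl = ((mue - Real.sqrt (mue * mub)) * Real.sqrt mub + lam * Real.sqrt mue) /
      (lam * (Real.sqrt mub + Real.sqrt mue))) :
    ∀ H ∈ Set.Icc (0:ℝ) 1, f Hcpl ≤ f H := by
  rintro H ⟨hH0, hH1⟩
  have hmub : 0 < mub := h0.trans h1
  have hf' : f = avgDownloadTime lam mub mue := funext hf
  rw [hf', hH, ← hCpl, avgDownloadTime_hCpl h0 hmub (h1.trans h2)]
  exact le_avgDownloadTime h0 hmub.le (hmub.trans h2).le (by nlinarith) (by nlinarith)

/-- If the CPL-optimal edge-cache-hit ratio `H_cpl` satisfies `H_cpl ≤ 1`, then it is a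
global minimizer of the average download time `f` over `[0,1]`. -/
theorem hcpl_global_minimizer
    (lam mub mue : ℝ) (h0 : 0 < lam) (h1 : lam < mub) (h2 : mub < mue)
    (f : ℝ → ℝ)
    (hf : ∀ H, f H = H / (mue - lam * H) + (1 - H) / (mub - lam * (1 - H)))
    (Hcpl : ℝ)
    (hH : Hcpl = ((mue - Real.sqrt (mue * mub)) * Real.sqrt mub + lam * Real.sqrt mue) /
      (lam * (Real.sqrt mub + Real.sqrt mue)))
    (hle : Hcpl ≤ 1) :
    ∀ H ∈ Set.Icc (0:ℝ) 1, f Hcpl ≤ f H :=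
  hcpl_global_minimizer_general lam mub mue h0 h1 h2 f hf Hcpl hH
end

section
/- Let λ, μ_b, μ_e be reals with 0 < λ < μ_b < μ_e, let H_csl ∈ (0,1], define f(H) = H/(μ_e − λH) + (1−H)/(μ_b − λ(1−H)) and H_cpl = ((μ_e − √(μ_e μ_b))·√μ_b + λ·√μ_e)/(λ·(√μ_b + √μ_e)), and set H* = min{H_csl, H_cpl}. Then f(H*) ≤ f(H) for every H ∈ [0, H_csl]; i.e., the heuristic ECHR H* minimizes the average download time over all edge-cache-hit ratios feasible under the cache-capacity constraint. -/
/-!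
Write `u(H) = μ_e - λH` and `v(H) = μ_b - λ(1 - H)`. For any two ECHRs `H, K`,
`f K - f H = (K - H) (φ(H) φ(K) - ψ(H) ψ(K))` with `φ = √μ_e / u` increasing and `ψ = √μ_b / v`
decreasing, and `H_cpl` is exactly the point where `φ = ψ`. Hence `f` decreases up to `H_cpl` and
increases after it, so its minimum over `[0, H_csl]` sits at `H_cpl` if that is feasible and at
the right end point `H_csl` otherwise.
-/

open Real

namespace EdgeCaching

noncomputable def adt (lam mub mue H : ℝ) : ℝ :=
  H / (mue - lam * H) + (1 - H) / (mub - lam * (1 - H))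

noncomputable def echrCpl (lam mub mue : ℝ) : ℝ :=
  ((mue - √(mue * mub)) * √mub + lam * √mue) / (lam * (√mub + √mue))

-- The derivative of `adt` is `edgeWeight ^ 2 - cloudWeight ^ 2`.
noncomputable def edgeWeight (lam mue H : ℝ) : ℝ := √mue / (mue - lam * H)

noncomputable def cloudWeight (lam mub H : ℝ) : ℝ := √mub / (mub - lam * (1 - H))

variable {lam mub mue : ℝ}

theorem adt_sub_adt (hmub : 0 ≤ mub) (hmue : 0 ≤ mue) {H K : ℝ}
    (huH : mue - lam * H ≠ 0) (huK : mue - lam * K ≠ 0)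
    (hvH : mub - lam * (1 - H) ≠ 0) (hvK : mub - lam * (1 - K) ≠ 0) :
    adt lam mub mue K - adt lam mub mue H =
      (K - H) * (edgeWeight lam mue H * edgeWeight lam mue K -
        cloudWeight lam mub H * cloudWeight lam mub K) := by
  simp only [adt, edgeWeight, cloudWeight, div_mul_div_comm, mul_self_sqrt hmub,
    mul_self_sqrt hmue]
  rw [div_add_div _ _ huK hvK, div_add_div _ _ huH hvH,
    div_sub_div _ _ (mul_ne_zero huK hvK) (mul_ne_zero huH hvH),
    div_sub_div _ _ (mul_ne_zero huH huK) (mul_ne_zero hvH hvK), mul_div_assoc',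
    div_eq_div_iff (by positivity) (by positivity)]
  ring

theorem edgeWeight_nonneg {H : ℝ} (hu : 0 ≤ mue - lam * H) : 0 ≤ edgeWeight lam mue H :=
  div_nonneg (sqrt_nonneg _) hu

theorem cloudWeight_nonneg {H : ℝ} (hv : 0 ≤ mub - lam * (1 - H)) :
    0 ≤ cloudWeight lam mub H :=
  div_nonneg (sqrt_nonneg _) hv

theorem edgeWeight_le_edgeWeight (hlam : 0 ≤ lam) {H K : ℝ} (huK : 0 < mue - lam * K)
    (hHK : H ≤ K) : edgeWeight lam mue H ≤ edgeWeight lam mue K :=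
  div_le_div_of_nonneg_left (sqrt_nonneg _) huK (by nlinarith)

theorem cloudWeight_le_cloudWeight (hlam : 0 ≤ lam) {H K : ℝ} (hvH : 0 < mub - lam * (1 - H))
    (hHK : H ≤ K) : cloudWeight lam mub K ≤ cloudWeight lam mub H :=
  div_le_div_of_nonneg_left (sqrt_nonneg _) hvH (by nlinarith)

section Balance

variable (hlam : 0 ≤ lam) (hmub : 0 ≤ mub) (hmue : 0 ≤ mue) {c : ℝ}
  (hc : edgeWeight lam mue c = cloudWeight lam mub c)
include hlam hmub hmue hc

theorem adt_le_of_le_of_le_balance (huc : 0 < mue - lam * c) {H K : ℝ}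
    (hvH : 0 < mub - lam * (1 - H)) (hHK : H ≤ K) (hKc : K ≤ c) :
    adt lam mub mue K ≤ adt lam mub mue H := by
  have hweights : edgeWeight lam mue H * edgeWeight lam mue K ≤
      cloudWeight lam mub H * cloudWeight lam mub K :=
    calc edgeWeight lam mue H * edgeWeight lam mue K
        ≤ edgeWeight lam mue c * edgeWeight lam mue c :=
          mul_le_mul (edgeWeight_le_edgeWeight hlam huc (hHK.trans hKc))
            (edgeWeight_le_edgeWeight hlam huc hKc) (edgeWeight_nonneg (by nlinarith))
            (edgeWeight_nonneg huc.le)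
      _ = cloudWeight lam mub c * cloudWeight lam mub c := by rw [hc]
      _ ≤ cloudWeight lam mub H * cloudWeight lam mub K :=
          mul_le_mul (cloudWeight_le_cloudWeight hlam hvH (hHK.trans hKc))
            (cloudWeight_le_cloudWeight hlam (by nlinarith) hKc)
            (cloudWeight_nonneg (by nlinarith)) (cloudWeight_nonneg hvH.le)
  rw [← sub_nonpos, adt_sub_adt hmub hmue (by nlinarith) (by nlinarith) hvH.ne' (by nlinarith)]
  exact mul_nonpos_of_nonneg_of_nonpos (sub_nonneg.2 hHK) (sub_nonpos.2 hweights)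

theorem adt_le_of_balance_le_of_le (hvc : 0 < mub - lam * (1 - c)) {H K : ℝ}
    (huH : 0 < mue - lam * H) (hcK : c ≤ K) (hKH : K ≤ H) :
    adt lam mub mue K ≤ adt lam mub mue H := by
  have hweights : cloudWeight lam mub H * cloudWeight lam mub K ≤
      edgeWeight lam mue H * edgeWeight lam mue K :=
    calc cloudWeight lam mub H * cloudWeight lam mub K
        ≤ cloudWeight lam mub c * cloudWeight lam mub c :=
          mul_le_mul (cloudWeight_le_cloudWeight hlam hvc (hcK.trans hKH))
            (cloudWeight_le_cloudWeight hlam hvc hcK) (cloudWeight_nonneg (by nlinarith))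
            (cloudWeight_nonneg hvc.le)
      _ = edgeWeight lam mue c * edgeWeight lam mue c := by rw [hc]
      _ ≤ edgeWeight lam mue H * edgeWeight lam mue K :=
          mul_le_mul (edgeWeight_le_edgeWeight hlam huH (hcK.trans hKH))
            (edgeWeight_le_edgeWeight hlam (by nlinarith) hcK)
            (edgeWeight_nonneg (by nlinarith)) (edgeWeight_nonneg huH.le)
  rw [← sub_nonpos, adt_sub_adt hmub hmue huH.ne' (by nlinarith) (by nlinarith) (by nlinarith)]
  exact mul_nonpos_of_nonpos_of_nonneg (sub_nonpos.2 hKH) (sub_nonneg.2 hweights)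

end Balance

section Cpl

variable (hlam : lam ≠ 0) (hmub : 0 < mub) (hmue : 0 < mue)
include hlam hmub hmue

theorem sqrt_mub_mul_sub_echrCpl :
    √mub * (mue - lam * echrCpl lam mub mue) =
      √mue * (mub - lam * (1 - echrCpl lam mub mue)) := by
  have hsum : √mub + √mue ≠ 0 := by positivity
  rw [echrCpl, sqrt_mul hmue.le]
  field_simp
  linear_combination (√mub * √mue + √mue ^ 2) * sq_sqrt hmub.le

theorem sub_echrCpl_pos (hsum : lam < mub + mue) :
    0 < mue - lam * echrCpl lam mub mue ∧ 0 < mub - lam * (1 - echrCpl lam mub mue) := by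
  have hbal := sqrt_mub_mul_sub_echrCpl hlam hmub hmue
  have hsb := sqrt_pos.2 hmub
  have hse := sqrt_pos.2 hmue
  constructor <;> nlinarith

theorem edgeWeight_echrCpl (hsum : lam < mub + mue) :
    edgeWeight lam mue (echrCpl lam mub mue) = cloudWeight lam mub (echrCpl lam mub mue) := by
  obtain ⟨hu, hv⟩ := sub_echrCpl_pos hlam hmub hmue hsum
  rw [edgeWeight, cloudWeight, div_eq_div_iff hu.ne' hv.ne']
  linear_combination -(sqrt_mub_mul_sub_echrCpl hlam hmub hmue)

end Cpl

end EdgeCaching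

open EdgeCaching in
theorem heuristic_echr_minimizes_adt_general
    (lam mub mue Hcsl : ℝ) (h0 : 0 < lam) (h1 : lam < mub) (h2 : mub < mue)
    (hcsl1 : Hcsl ≤ 1)
    (f : ℝ → ℝ)
    (hf : ∀ H, f H = H / (mue - lam * H) + (1 - H) / (mub - lam * (1 - H)))
    (Hcpl : ℝ)
    (hH : Hcpl = ((mue - Real.sqrt (mue * mub)) * Real.sqrt mub + lam * Real.sqrt mue) /
      (lam * (Real.sqrt mub + Real.sqrt mue)))
    (Hstar : ℝ) (hstar : Hstar = min Hcsl Hcpl) :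
    ∀ H ∈ Set.Icc (0:ℝ) Hcsl, f Hstar ≤ f H := by
  rintro H ⟨hH0, hHcsl⟩
  obtain rfl : f = adt lam mub mue := funext hf
  change Hcpl = echrCpl lam mub mue at hH
  subst hH hstar
  have hmub : 0 < mub := h0.trans h1
  have hmue : 0 < mue := hmub.trans h2
  obtain ⟨hu, hv⟩ := sub_echrCpl_pos h0.ne' hmub hmue (by linarith)
  have hbal := edgeWeight_echrCpl h0.ne' hmub hmue (by linarith)
  have huH : 0 < mue - lam * H := by nlinarith
  have hvH : 0 < mub - lam * (1 - H) := by nlinarith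
  rcases le_total (echrCpl lam mub mue) Hcsl with hle | hle
  · rw [min_eq_right hle]
    rcases le_total H (echrCpl lam mub mue) with hHc | hcH
    · exact adt_le_of_le_of_le_balance h0.le hmub.le hmue.le hbal hu hvH hHc le_rfl
    · exact adt_le_of_balance_le_of_le h0.le hmub.le hmue.le hbal hv huH le_rfl hcH
  · rw [min_eq_left hle]
    exact adt_le_of_le_of_le_balance h0.le hmub.le hmue.le hbal hu hvH hHcsl hle

/-- The heuristic edge-cache-hit ratio `H* = min{H_csl, H_cpl}` minimizes the average
download time `f` over the feasible ECHRs `[0, H_csl]`. -/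
theorem heuristic_echr_minimizes_adt
    (lam mub mue Hcsl : ℝ) (h0 : 0 < lam) (h1 : lam < mub) (h2 : mub < mue)
    (hcsl0 : 0 < Hcsl) (hcsl1 : Hcsl ≤ 1)
    (f : ℝ → ℝ)
    (hf : ∀ H, f H = H / (mue - lam * H) + (1 - H) / (mub - lam * (1 - H)))
    (Hcpl : ℝ)
    (hH : Hcpl = ((mue - Real.sqrt (mue * mub)) * Real.sqrt mub + lam * Real.sqrt mue) /
      (lam * (Real.sqrt mub + Real.sqrt mue)))
    (Hstar : ℝ) (hstar : Hstar = min Hcsl Hcpl) :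
    ∀ H ∈ Set.Icc (0:ℝ) Hcsl, f Hstar ≤ f H :=
  heuristic_echr_minimizes_adt_general lam mub mue Hcsl h0 h1 h2 hcsl1 f hf Hcpl hH Hstar hstar
end

section
/- Let μ_b, μ_e be reals with 0 < μ_b < μ_e, let H_csl ∈ (0,1] satisfy H_csl·(√μ_e + √μ_b) > √μ_e, define H_cpl(λ) = ((μ_e − √(μ_e μ_b))·√μ_b + λ·√μ_e)/(λ·(√μ_b + √μ_e)) and λ* = √(μ_b μ_e)·(√μ_e − √μ_b)/(H_csl·(√μ_e + √μ_b) − √μ_e). Then for every λ with 0 < λ < λ* we have H_cpl(λ) > H_csl, and for every λ > λ* we have H_cpl(λ) < H_csl. -/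
/-!
Write `a = √μ_b`, `b = √μ_e`. Since `√(μ_e μ_b) = a b`, the CPL ratio is
`H_cpl(λ) = (c + λ b) / (λ (a + b))` with `c = a b (b - a) > 0`, and clearing the positive
denominator turns `H_cpl(λ) > H_csl` into `λ (H_csl (a + b) - b) < c`. The hypothesis on `H_csl`
makes `H_csl (a + b) - b` positive, so this is exactly `λ < c / (H_csl (a + b) - b) = λ*`.
-/

section Threshold

variable {b c s H lam : ℝ}

theorem lt_div_mul_iff_lt_div_sub (hlam : 0 < lam) (hs : 0 < s) (hb : b < H * s) :
    H < (c + lam * b) / (lam * s) ↔ lam < c / (H * s - b) := by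
  rw [lt_div_iff₀ (mul_pos hlam hs), lt_div_iff₀ (sub_pos.2 hb)]
  constructor <;> intro h <;> linarith

theorem div_mul_lt_iff_div_sub_lt (hlam : 0 < lam) (hs : 0 < s) (hb : b < H * s) :
    (c + lam * b) / (lam * s) < H ↔ c / (H * s - b) < lam := by
  rw [div_lt_iff₀ (mul_pos hlam hs), div_lt_iff₀ (sub_pos.2 hb)]
  constructor <;> intro h <;> linarith

end Threshold

theorem sub_sqrt_mul_mul_sqrt (x : ℝ) {y : ℝ} (hy : 0 ≤ y) :
    (y - √(y * x)) * √x = √x * √y * (√y - √x) := by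
  rw [Real.sqrt_mul hy]
  linear_combination -√x * Real.sq_sqrt hy

theorem lambda_star_threshold_general
    (mub mue Hcsl : ℝ) (h0 : 0 < mub) (h2 : mub < mue)
    (hgt : Hcsl * (Real.sqrt mue + Real.sqrt mub) > Real.sqrt mue)
    (Hcpl : ℝ → ℝ)
    (hH : ∀ lam, Hcpl lam =
      ((mue - Real.sqrt (mue * mub)) * Real.sqrt mub + lam * Real.sqrt mue) /
      (lam * (Real.sqrt mub + Real.sqrt mue)))
    (lamstar : ℝ)
    (hls : lamstar = Real.sqrt (mub * mue) * (Real.sqrt mue - Real.sqrt mub) /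
      (Hcsl * (Real.sqrt mue + Real.sqrt mub) - Real.sqrt mue)) :
    (∀ lam : ℝ, 0 < lam → lam < lamstar → Hcpl lam > Hcsl) ∧
    (∀ lam : ℝ, lam > lamstar → Hcpl lam < Hcsl) := by
  have ha : 0 < √mub := Real.sqrt_pos.2 h0
  have hab : √mub < √mue := Real.sqrt_lt_sqrt h0.le h2
  have hs : 0 < √mub + √mue := by linarith
  have hgt' : √mue < Hcsl * (√mub + √mue) := by rwa [add_comm]
  rw [sub_sqrt_mul_mul_sqrt mub (h0.trans h2).le] at hH
  rw [Real.sqrt_mul h0.le, add_comm (√mue)] at hls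
  have hstar_pos : 0 < lamstar :=
    hls ▸ div_pos (mul_pos (mul_pos ha (ha.trans hab)) (sub_pos.2 hab)) (sub_pos.2 hgt')
  refine ⟨fun lam hlam hlt => ?_, fun lam hgt_lam => ?_⟩
  · rw [hH, gt_iff_lt, lt_div_mul_iff_lt_div_sub hlam hs hgt', ← hls]
    exact hlt
  · rw [hH, div_mul_lt_iff_div_sub_lt (hstar_pos.trans hgt_lam) hs hgt', ← hls]
    exact hgt_lam

/-- The threshold arrival rate `λ*` separates the two regimes of the heuristic:
for `λ < λ*` the CPL-optimal ECHR exceeds `H_csl` (CSL regime), and for `λ > λ*`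
it is below `H_csl` (CPL regime). -/
theorem lambda_star_threshold
    (mub mue Hcsl : ℝ) (h0 : 0 < mub) (h2 : mub < mue)
    (hcsl0 : 0 < Hcsl) (hcsl1 : Hcsl ≤ 1)
    (hgt : Hcsl * (Real.sqrt mue + Real.sqrt mub) > Real.sqrt mue)
    (Hcpl : ℝ → ℝ)
    (hH : ∀ lam, Hcpl lam =
      ((mue - Real.sqrt (mue * mub)) * Real.sqrt mub + lam * Real.sqrt mue) /
      (lam * (Real.sqrt mub + Real.sqrt mue)))
    (lamstar : ℝ)
    (hls : lamstar = Real.sqrt (mub * mue) * (Real.sqrt mue - Real.sqrt mub) /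
      (Hcsl * (Real.sqrt mue + Real.sqrt mub) - Real.sqrt mue)) :
    (∀ lam : ℝ, 0 < lam → lam < lamstar → Hcpl lam > Hcsl) ∧
    (∀ lam : ℝ, lam > lamstar → Hcpl lam < Hcsl) :=
  lambda_star_threshold_general mub mue Hcsl h0 h2 hgt Hcpl hH lamstar hls
end
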